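/- arXiv:1307.2757 — 2 statements merged into one kernel-verified Lean document; each statement's English description precedes it below -/
import Mathlib

section
/- Let N ≥ 2, α > N − 1, and let h : [0,∞) → [0,∞) be nondecreasing and suppose there exist ε > 0, M > 0 and δ > 0 such that h(t) ≤ M·t^{1+ε} for all t ∈ (0,δ]. Then for every c > 0, ∫_0^1 t^{N−α−2} h(c·t^{α+1−N}) dt < ∞. -/
open Set MeasureTheory

/-- If `α > N − 1` and `h` is nondecreasing on `[0,∞)` with `h(t) ≤ M t^{1+ε}` near `0`,
then the subcriticality integral `∫_0^1 t^{N−α−2} h(c t^{α+1−N}) dt` is finite for all `c > 0`. -/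
theorem stmt_9 (N : ℕ) (hN : 2 ≤ N) (α : ℝ) (hα : (N:ℝ) - 1 < α)
    (h : ℝ → ℝ) (hmono : MonotoneOn h (Set.Ici (0:ℝ))) (hnn : ∀ t : ℝ, 0 ≤ t → 0 ≤ h t)
    (ε M δ : ℝ) (hε : 0 < ε) (hM : 0 < M) (hδ : 0 < δ)
    (hsmall : ∀ t : ℝ, 0 < t → t ≤ δ → h t ≤ M * t ^ (1 + ε)) :
    ∀ c > (0:ℝ),
      (∫⁻ t in Set.Ioo (0:ℝ) 1,
        ENNReal.ofReal (t ^ ((N:ℝ) - α - 2) * h (c * t ^ (α + 1 - (N:ℝ))))) ≠ ⊤ := by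
  intro c hc
  set p : ℝ := α + 1 - (N:ℝ) with hp_def
  have hp : 0 < p := by simp only [hp_def]; linarith
  set β : ℝ := ε * p - 1 with hβ_def
  have hβ : -1 < β := by
    have : 0 < ε * p := mul_pos hε hp
    simp only [hβ_def]; linarith
  set K : ℝ := M * c ^ (1 + ε) + h c * (c / δ) ^ (1 + ε) with hK_def
  have hcδ : (0:ℝ) < c / δ := div_pos hc hδ
  have hδc : (0:ℝ) < δ / c := div_pos hδ hc
  have hKnn : 0 ≤ K := by
    have h1 : 0 ≤ M * c ^ (1 + ε) := by positivity
    have h2 : 0 ≤ h c := hnn c hc.le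
    have h3 : 0 ≤ (c / δ) ^ (1 + ε) := Real.rpow_nonneg hcδ.le _
    simp only [hK_def]; nlinarith
  -- pointwise bound
  have key : ∀ t ∈ Set.Ioo (0:ℝ) 1,
      t ^ ((N:ℝ) - α - 2) * h (c * t ^ p) ≤ K * t ^ β := by
    intro t ht
    obtain ⟨ht0, ht1⟩ := ht
    have htp : 0 < t ^ p := Real.rpow_pos_of_pos ht0 _
    have hctp : 0 < c * t ^ p := mul_pos hc htp
    have e1 : t ^ ((N:ℝ) - α - 2) * t ^ (p * (1 + ε)) = t ^ β := by
      rw [← Real.rpow_add ht0]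
      congr 1
      simp only [hβ_def, hp_def]; ring
    have htb : 0 < t ^ β := Real.rpow_pos_of_pos ht0 _
    have htNa : 0 < t ^ ((N:ℝ) - α - 2) := Real.rpow_pos_of_pos ht0 _
    rcases le_or_gt (c * t ^ p) δ with hcase | hcase
    · -- small case
      have hb := hsmall _ hctp hcase
      have e2 : (c * t ^ p) ^ (1 + ε) = c ^ (1 + ε) * t ^ (p * (1 + ε)) := by
        rw [Real.mul_rpow hc.le htp.le, ← Real.rpow_mul ht0.le]
      have : t ^ ((N:ℝ) - α - 2) * h (c * t ^ p)
          ≤ t ^ ((N:ℝ) - α - 2) * (M * (c ^ (1 + ε) * t ^ (p * (1 + ε)))) := by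
        rw [← e2]
        exact mul_le_mul_of_nonneg_left hb htNa.le
      refine this.trans ?_
      have : t ^ ((N:ℝ) - α - 2) * (M * (c ^ (1 + ε) * t ^ (p * (1 + ε))))
          = M * c ^ (1 + ε) * t ^ β := by rw [← e1]; ring
      rw [this]
      have h2 : 0 ≤ h c * (c / δ) ^ (1 + ε) :=
        mul_nonneg (hnn c hc.le) (Real.rpow_nonneg hcδ.le _)
      have : M * c ^ (1 + ε) ≤ K := by simp only [hK_def]; linarith
      exact mul_le_mul_of_nonneg_right this htb.le
    · -- large case
      have htp1 : t ^ p ≤ 1 := Real.rpow_le_one ht0.le ht1.le hp.le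
      have hle : c * t ^ p ≤ c := by nlinarith
      have hh : h (c * t ^ p) ≤ h c := hmono hctp.le hc.le hle
      have hδc_le : δ / c ≤ t ^ p := by
        rw [div_le_iff₀ hc]; nlinarith
      have h4 : (δ / c) ^ (1 + ε) ≤ (t ^ p) ^ (1 + ε) :=
        Real.rpow_le_rpow hδc.le hδc_le (by linarith)
      have h5 : (c / δ) ^ (1 + ε) * (δ / c) ^ (1 + ε) = 1 := by
        have hd : c / δ * (δ / c) = 1 := by field_simp
        rw [← Real.mul_rpow hcδ.le hδc.le, hd, Real.one_rpow]
      have hcd_pos : 0 < (c / δ) ^ (1 + ε) := Real.rpow_pos_of_pos hcδ _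
      have h6 : 1 ≤ (c / δ) ^ (1 + ε) * (t ^ p) ^ (1 + ε) := by
        have := mul_le_mul_of_nonneg_left h4 hcd_pos.le
        linarith
      have e3 : (t ^ p) ^ (1 + ε) = t ^ (p * (1 + ε)) := by
        rw [← Real.rpow_mul ht0.le]
      -- t^(N-α-2) ≤ (c/δ)^(1+ε) * t^β
      have h7 : t ^ ((N:ℝ) - α - 2) ≤ (c / δ) ^ (1 + ε) * t ^ β := by
        rw [← e1]
        calc t ^ ((N:ℝ) - α - 2)
            = t ^ ((N:ℝ) - α - 2) * 1 := by ring
          _ ≤ t ^ ((N:ℝ) - α - 2) * ((c / δ) ^ (1 + ε) * (t ^ p) ^ (1 + ε)) :=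
              mul_le_mul_of_nonneg_left h6 htNa.le
          _ = (c / δ) ^ (1 + ε) * (t ^ ((N:ℝ) - α - 2) * t ^ (p * (1 + ε))) := by
              rw [e3]; ring
      have hhc : 0 ≤ h c := hnn c hc.le
      have hhcp : 0 ≤ h (c * t ^ p) := hnn _ hctp.le
      calc t ^ ((N:ℝ) - α - 2) * h (c * t ^ p)
          ≤ t ^ ((N:ℝ) - α - 2) * h c := mul_le_mul_of_nonneg_left hh htNa.le
        _ ≤ ((c / δ) ^ (1 + ε) * t ^ β) * h c := mul_le_mul_of_nonneg_right h7 hhc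
        _ = (h c * (c / δ) ^ (1 + ε)) * t ^ β := by ring
        _ ≤ K * t ^ β := by
            have h1 : 0 ≤ M * c ^ (1 + ε) := by positivity
            have : h c * (c / δ) ^ (1 + ε) ≤ K := by simp only [hK_def]; linarith
            exact mul_le_mul_of_nonneg_right this htb.le
  -- integrability of the bound
  have hint : IntegrableOn (fun t : ℝ => K * t ^ β) (Set.Ioo (0:ℝ) 1) := by
    have := intervalIntegral.intervalIntegrable_rpow' (a := 0) (b := 1) hβ
    rw [intervalIntegrable_iff_integrableOn_Ioo_of_le (by norm_num : (0:ℝ) ≤ 1)] at this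
    exact this.const_mul K
  have hfin : (∫⁻ t in Set.Ioo (0:ℝ) 1, ENNReal.ofReal (K * t ^ β)) < ⊤ :=
    hint.setLIntegral_lt_top
  have hmeas : Measurable fun t : ℝ => ENNReal.ofReal (K * t ^ β) := by
    apply Measurable.ennreal_ofReal
    measurability
  refine ne_top_of_le_ne_top hfin.ne ?_
  refine setLIntegral_mono hmeas ?_
  intro t ht
  exact ENNReal.ofReal_le_ofReal (key t ht)
end

section
/- Let N ≥ 2 and N − 1 ≤ α. Let h : [0,∞) → [0,∞) be nondecreasing with h(t) > 0 for t > 0, and let U : ℝ^N_+ → (0,∞) be continuous and self-similar of degree −α, i.e. a^α U(a·x) = U(x) for all a > 0 and x ∈ ℝ^N_+ (where ℝ^N_+ = {x : x₁ > 0}). Then ∫_{ℝ^N_+ ∩ B_1(0)} x₁^{−1−α} h(x₁^α U(x)) dx = ∞. -/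
open Metric Set MeasureTheory Filter Topology

/-- Distance to the boundary of `Ω`: `ρ(x) = dist(x, ∂Ω)`. -/
noncomputable def bdist {N : ℕ} (Ω : Set (EuclideanSpace ℝ (Fin N)))
    (x : EuclideanSpace ℝ (Fin N)) : ℝ :=
  Metric.infDist x (frontier Ω)

/-- The Laplacian of `u` at `x`, as the trace of the second derivative. -/
noncomputable def lap {N : ℕ} (u : EuclideanSpace ℝ (Fin N) → ℝ)
    (x : EuclideanSpace ℝ (Fin N)) : ℝ :=
  ∑ i : Fin N, iteratedFDeriv ℝ 2 u x ![EuclideanSpace.single i 1, EuclideanSpace.single i 1]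

/-- `u` is a classical solution of `−Δu + ρ^{−2−α} h(ρ^α u) = 0` on the open set `D`,
where `ρ = bdist Ω` is the distance to the boundary of `Ω`. -/
def IsSolutionOn {N : ℕ} (Ω D : Set (EuclideanSpace ℝ (Fin N))) (α : ℝ) (h : ℝ → ℝ)
    (u : EuclideanSpace ℝ (Fin N) → ℝ) : Prop :=
  ContDiffOn ℝ 2 u D ∧
    ∀ x ∈ D, lap u x = bdist Ω x ^ (-2 - α) * h (bdist Ω x ^ α * u x)

/-- `u` is a classical solution of equation (E): `−Δu + ρ^{−2−α} h(ρ^α u) = 0` in `Ω`. -/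
def IsSolution {N : ℕ} (Ω : Set (EuclideanSpace ℝ (Fin N))) (α : ℝ) (h : ℝ → ℝ)
    (u : EuclideanSpace ℝ (Fin N) → ℝ) : Prop :=
  IsSolutionOn Ω Ω α h u

/-- Conditions (2)(i),(ii): `h ∈ C¹`, `h(0)=0`, `h>0` on `(0,∞)`, `h` convex and odd. -/
def Cond2 (h : ℝ → ℝ) : Prop :=
  ContDiff ℝ 1 h ∧ h 0 = 0 ∧ (∀ t > (0:ℝ), 0 < h t) ∧
    ConvexOn ℝ Set.univ h ∧ ∀ t, h (-t) = -h t

/-- The Keller–Osserman condition: `∫_a^∞ F(s)^{−1/2} ds < ∞` for all `a>0`,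
where `F(s) = ∫_0^s h(t) dt`. -/
def KellerOsserman (h : ℝ → ℝ) : Prop :=
  ∀ a > (0:ℝ), MeasureTheory.IntegrableOn
    (fun s => (∫ t in (0:ℝ)..s, h t) ^ (-(1/2) : ℝ)) (Set.Ioi a)

/-- Condition (h0): `limsup_{t→0+} h(t)/t^{1+ε} < ∞` for some `ε > 0` (quantitative form). -/
def CondH0 (h : ℝ → ℝ) : Prop :=
  ∃ ε > (0:ℝ), ∃ M : ℝ, ∃ δ > (0:ℝ), ∀ t : ℝ, 0 < t → t ≤ δ → h t ≤ M * t ^ (1 + ε)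

/-- The subcriticality condition (sub): `∫_0^1 t^{N−α−2} h(c t^{α+1−N}) dt < ∞` for all `c>0`. -/
def SubCond (N : ℕ) (α : ℝ) (h : ℝ → ℝ) : Prop :=
  ∀ c > (0:ℝ),
    (∫⁻ t in Set.Ioo (0:ℝ) 1,
      ENNReal.ofReal (t ^ ((N:ℝ) - α - 2) * h (c * t ^ (α + 1 - (N:ℝ))))) ≠ ⊤

/-- The Δ₂ condition. -/
def Delta2 (h : ℝ → ℝ) : Prop :=
  ∃ c > (0:ℝ), ∀ a > (0:ℝ), ∀ b > (0:ℝ), h (a + b) ≤ c * (h a + h b)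

/-- The global barrier condition for equation (E) in `Ω`. -/
def GlobalBarrier {N : ℕ} (Ω : Set (EuclideanSpace ℝ (Fin N))) (α : ℝ) (h : ℝ → ℝ) : Prop :=
  ∃ rb > (0:ℝ), ∃ C₀ : ℝ, ∀ z ∈ frontier Ω, ∀ r : ℝ, 0 < r → r ≤ rb →
    ∃ w : EuclideanSpace ℝ (Fin N) → ℝ,
      IsSolutionOn Ω (Metric.ball z r ∩ Ω) α h w ∧
      (∀ x ∈ Metric.ball z r ∩ Ω, 0 < w x) ∧
      ContinuousOn w (Metric.ball z r ∩ closure Ω) ∧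
      (∀ x ∈ frontier Ω ∩ Metric.ball z r, w x = 0) ∧
      (∀ y ∈ Metric.sphere z r ∩ Ω,
        Filter.Tendsto w (nhdsWithin y (Metric.ball z r ∩ Ω)) Filter.atTop) ∧
      (r = rb → ∀ x ∈ closure Ω ∩ Metric.ball z (rb / 2),
        |w x| ≤ C₀ ∧ ‖fderiv ℝ w x‖ ≤ C₀ ∧ ‖iteratedFDeriv ℝ 2 w x‖ ≤ C₀)

/-- `Ω` has a boundary of class `C²`: near the boundary, `Ω` is the sublevel set of a `C²`
defining function with nonvanishing gradient on the boundary. -/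
def HasC2Boundary {N : ℕ} (Ω : Set (EuclideanSpace ℝ (Fin N))) : Prop :=
  ∃ (U : Set (EuclideanSpace ℝ (Fin N))) (Φ : EuclideanSpace ℝ (Fin N) → ℝ),
    IsOpen U ∧ frontier Ω ⊆ U ∧ ContDiff ℝ 2 Φ ∧
    (∀ x ∈ U, (x ∈ Ω ↔ Φ x < 0)) ∧
    ∀ x ∈ frontier Ω, fderiv ℝ Φ x ≠ 0

/-- `u` extends continuously to `cl(Ω) \ F` with boundary value `0` on `∂Ω \ F`. -/
def VanishesOnBoundaryOff {N : ℕ} (Ω F : Set (EuclideanSpace ℝ (Fin N)))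
    (u : EuclideanSpace ℝ (Fin N) → ℝ) : Prop :=
  ∃ v : EuclideanSpace ℝ (Fin N) → ℝ,
    ContinuousOn v (closure Ω \ F) ∧ (∀ x ∈ Ω, v x = u x) ∧
    ∀ x ∈ frontier Ω \ F, v x = 0

/-- The integrand `ρ^{−1−α} h(ρ^α u) = ρ · H(ρ,u)`, as an extended-real-valued function. -/
noncomputable def rhoH {N : ℕ} (Ω : Set (EuclideanSpace ℝ (Fin N))) (α : ℝ) (h : ℝ → ℝ)
    (u : EuclideanSpace ℝ (Fin N) → ℝ) (x : EuclideanSpace ℝ (Fin N)) : ENNReal :=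
  ENNReal.ofReal (bdist Ω x ^ (-1 - α) * h (bdist Ω x ^ α * u x))

/-- `y ∈ ∂Ω` is a strongly singular point of `u`:
`∫_{O∩Ω} ρ^{−1−α} h(ρ^α u) dx = ∞` for every open neighborhood `O` of `y`. -/
def StronglySingularAt {N : ℕ} (Ω : Set (EuclideanSpace ℝ (Fin N))) (α : ℝ)
    (h : ℝ → ℝ) (u : EuclideanSpace ℝ (Fin N) → ℝ) (y : EuclideanSpace ℝ (Fin N)) : Prop :=
  ∀ O : Set (EuclideanSpace ℝ (Fin N)), IsOpen O → y ∈ O →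
    (∫⁻ x in Ω ∩ O, rhoH Ω α h u x) = ⊤

/-- `u` is a positive solution of (E) with a strong isolated singularity at `y ∈ ∂Ω`. -/
def HasStrongIsolatedSingularity {N : ℕ} (Ω : Set (EuclideanSpace ℝ (Fin N))) (α : ℝ)
    (h : ℝ → ℝ) (y : EuclideanSpace ℝ (Fin N)) (u : EuclideanSpace ℝ (Fin N) → ℝ) : Prop :=
  IsSolution Ω α h u ∧ (∀ x ∈ Ω, 0 < u x) ∧ VanishesOnBoundaryOff Ω {y} u ∧
    ∀ r > (0:ℝ), (∫⁻ x in Ω ∩ Metric.ball y r, rhoH Ω α h u x) = ⊤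

/-- The open half-space `ℝ^N_+ = {x : x₁ > 0}`. -/
def halfSpace (N : ℕ) [NeZero N] : Set (EuclideanSpace ℝ (Fin N)) := {x | 0 < x 0}

/-- `u` is a classical solution of (E) in the half-space, where `ρ(x) = x₁`:
`Δu = x₁^{−2−α} h(x₁^α u)`. -/
def IsSolutionH (N : ℕ) [NeZero N] (α : ℝ) (h : ℝ → ℝ)
    (u : EuclideanSpace ℝ (Fin N) → ℝ) : Prop :=
  ContDiffOn ℝ 2 u (halfSpace N) ∧
    ∀ x ∈ halfSpace N, lap u x = (x 0) ^ (-2 - α) * h ((x 0) ^ α * u x)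

/-- `u` is a positive solution of (E) in the half-space with a strong isolated
singularity at the origin. -/
def StrongSingH (N : ℕ) [NeZero N] (α : ℝ) (h : ℝ → ℝ)
    (u : EuclideanSpace ℝ (Fin N) → ℝ) : Prop :=
  IsSolutionH N α h u ∧ (∀ x ∈ halfSpace N, 0 < u x) ∧
    VanishesOnBoundaryOff (halfSpace N) {0} u ∧
    ∀ r > (0:ℝ), (∫⁻ x in halfSpace N ∩ Metric.ball 0 r,
      ENNReal.ofReal ((x 0) ^ (-1 - α) * h ((x 0) ^ α * u x))) = ⊤

/-- The global barrier condition for (E) in the half-space (with `ρ(x) = x₁`). -/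
def GlobalBarrierH (N : ℕ) [NeZero N] (α : ℝ) (h : ℝ → ℝ) : Prop :=
  ∃ rb > (0:ℝ), ∃ C₀ : ℝ, ∀ z ∈ frontier (halfSpace N), ∀ r : ℝ, 0 < r → r ≤ rb →
    ∃ w : EuclideanSpace ℝ (Fin N) → ℝ,
      ContDiffOn ℝ 2 w (Metric.ball z r ∩ halfSpace N) ∧
      (∀ x ∈ Metric.ball z r ∩ halfSpace N,
        lap w x = (x 0) ^ (-2 - α) * h ((x 0) ^ α * w x)) ∧
      (∀ x ∈ Metric.ball z r ∩ halfSpace N, 0 < w x) ∧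
      ContinuousOn w (Metric.ball z r ∩ closure (halfSpace N)) ∧
      (∀ x ∈ frontier (halfSpace N) ∩ Metric.ball z r, w x = 0) ∧
      (∀ y ∈ Metric.sphere z r ∩ halfSpace N,
        Filter.Tendsto w (nhdsWithin y (Metric.ball z r ∩ halfSpace N)) Filter.atTop) ∧
      (r = rb → ∀ x ∈ closure (halfSpace N) ∩ Metric.ball z (rb / 2),
        |w x| ≤ C₀ ∧ ‖fderiv ℝ w x‖ ≤ C₀ ∧ ‖iteratedFDeriv ℝ 2 w x‖ ≤ C₀)

open scoped ENNReal Pointwise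

lemma coord_le_norm' {N : ℕ} (x : EuclideanSpace ℝ (Fin N)) (i : Fin N) : |x i| ≤ ‖x‖ := by
  rw [EuclideanSpace.norm_eq]
  rw [show |x i| = Real.sqrt (‖x i‖ ^ 2) by rw [Real.sqrt_sq_eq_abs]; simp]
  apply Real.sqrt_le_sqrt
  exact Finset.single_le_sum (f := fun j => ‖x j‖ ^ 2) (fun j _ => sq_nonneg _) (Finset.mem_univ i)

/-- If `α ≥ N − 1`, every positive continuous self-similar function of degree `−α` in the
half-space satisfies the strong singularity condition at the origin:
`∫_{ℝ^N_+ ∩ B_1} x₁^{−1−α} h(x₁^α U) dx = ∞`. -/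
theorem stmt_13 (N : ℕ) [NeZero N] (hN : 2 ≤ N) (α : ℝ) (hα : (N:ℝ) - 1 ≤ α)
    (h : ℝ → ℝ) (hmono : MonotoneOn h (Set.Ici (0:ℝ)))
    (hnn : ∀ t : ℝ, 0 ≤ t → 0 ≤ h t) (hpos : ∀ t > (0:ℝ), 0 < h t)
    (U : EuclideanSpace ℝ (Fin N) → ℝ) (hUc : ContinuousOn U (halfSpace N))
    (hUpos : ∀ x ∈ halfSpace N, 0 < U x)
    (hss : ∀ a > (0:ℝ), ∀ x ∈ halfSpace N, a ^ α * U (a • x) = U x) :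
    (∫⁻ x in halfSpace N ∩ Metric.ball 0 1,
      ENNReal.ofReal ((x 0) ^ (-1 - α) * h ((x 0) ^ α * U x))) = ⊤ := by
  have hN2 : (2:ℝ) ≤ (N:ℝ) := by exact_mod_cast hN
  have hα0 : (0:ℝ) ≤ α := by linarith
  have hproj : Continuous fun x : EuclideanSpace ℝ (Fin N) => x 0 :=
    (EuclideanSpace.proj (0 : Fin N)).continuous
  set F : EuclideanSpace ℝ (Fin N) → ℝ≥0∞ :=
    fun x => ENNReal.ofReal ((x 0) ^ (-1 - α) * h ((x 0) ^ α * U x)) with hF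
  -- minimum of U on the compact cap of the unit sphere
  set S : Set (EuclideanSpace ℝ (Fin N)) :=
    Metric.sphere 0 1 ∩ {x | 1/2 ≤ x 0} with hSdef
  have hScpt : IsCompact S :=
    (isCompact_sphere _ _).inter_right (isClosed_le continuous_const hproj)
  have hSsub : S ⊆ halfSpace N := by
    intro x hx
    have : (1:ℝ)/2 ≤ x 0 := hx.2
    show 0 < x 0
    linarith
  have hSne : S.Nonempty := by
    refine ⟨EuclideanSpace.single (0 : Fin N) (1:ℝ), ?_, ?_⟩
    · rw [mem_sphere_zero_iff_norm, EuclideanSpace.norm_single]; norm_num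
    · show (1:ℝ)/2 ≤ EuclideanSpace.single (0 : Fin N) (1:ℝ) 0
      simp [EuclideanSpace.single_apply]
      norm_num
  obtain ⟨z, hzS, hzmin⟩ := hScpt.exists_isMinOn hSne (hUc.mono hSsub)
  have hm : 0 < U z := hUpos z (hSsub hzS)
  set c : ℝ := (2:ℝ)⁻¹ ^ α * U z with hcdef
  have hc : 0 < c := mul_pos (Real.rpow_pos_of_pos (by norm_num) α) hm
  -- key pointwise lower bound on the cone
  have key : ∀ x : EuclideanSpace ℝ (Fin N), ‖x‖ / 2 < x 0 → 0 < ‖x‖ →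
      c ≤ (x 0) ^ α * U x := by
    intro x hx hnx
    have hx0 : 0 < x 0 := lt_of_le_of_lt (by positivity) hx
    have hxH : x ∈ halfSpace N := hx0
    set y := ‖x‖⁻¹ • x with hy
    have hyn : ‖y‖ = 1 := by
      rw [hy, norm_smul, norm_inv, norm_norm, inv_mul_cancel₀ hnx.ne']
    have hy0 : y 0 = ‖x‖⁻¹ * x 0 := rfl
    have hyS : y ∈ S := by
      refine ⟨mem_sphere_zero_iff_norm.mpr hyn, ?_⟩
      show (1:ℝ)/2 ≤ y 0
      have h1 : (1:ℝ)/2 = ‖x‖⁻¹ * (‖x‖/2) := by field_simp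
      rw [hy0, h1]
      exact mul_le_mul_of_nonneg_left hx.le (inv_nonneg.mpr hnx.le)
    have hU := hss ‖x‖⁻¹ (inv_pos.mpr hnx) x hxH
    have hUy : U z ≤ U y := isMinOn_iff.mp hzmin y hyS
    calc c = (2:ℝ)⁻¹ ^ α * U z := rfl
      _ ≤ (x 0 / ‖x‖) ^ α * U y := by
          apply mul_le_mul _ hUy hm.le (Real.rpow_nonneg (by positivity) α)
          apply Real.rpow_le_rpow (by norm_num) _ hα0
          rw [le_div_iff₀ hnx]; linarith
      _ = (x 0) ^ α * ((‖x‖⁻¹) ^ α * U y) := by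
          rw [div_eq_mul_inv, Real.mul_rpow hx0.le (inv_nonneg.mpr hnx.le)]; ring
      _ = (x 0) ^ α * U x := by rw [hU]
  -- dyadic annuli in the cone
  set r : ℕ → ℝ := fun k => (2:ℝ)⁻¹ ^ k with hrdef
  have hrpos : ∀ k, 0 < r k := fun k => pow_pos (by norm_num) k
  have hrle1 : ∀ k, r k ≤ 1 := fun k => pow_le_one₀ (by norm_num) (by norm_num)
  set A : ℕ → Set (EuclideanSpace ℝ (Fin N)) :=
    fun k => {x | r (k+1) < ‖x‖ ∧ ‖x‖ < r k ∧ ‖x‖ / 2 < x 0} with hAdef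
  have hAopen : ∀ k, IsOpen (A k) := by
    intro k
    have h1 : IsOpen {x : EuclideanSpace ℝ (Fin N) | r (k+1) < ‖x‖} :=
      isOpen_lt continuous_const continuous_norm
    have h2 : IsOpen {x : EuclideanSpace ℝ (Fin N) | ‖x‖ < r k} :=
      isOpen_lt continuous_norm continuous_const
    have h3 : IsOpen {x : EuclideanSpace ℝ (Fin N) | ‖x‖ / 2 < x 0} :=
      isOpen_lt (continuous_norm.div_const 2) hproj
    exact h1.inter (h2.inter h3)
  have hA0ne : (A 0).Nonempty := by
    refine ⟨EuclideanSpace.single (0 : Fin N) ((3:ℝ)/4), ?_, ?_, ?_⟩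
    · show r 1 < ‖_‖
      rw [EuclideanSpace.norm_single, hrdef]; norm_num
    · show ‖_‖ < r 0
      rw [EuclideanSpace.norm_single, hrdef]; norm_num
    · show ‖EuclideanSpace.single (0 : Fin N) ((3:ℝ)/4)‖ / 2 <
        EuclideanSpace.single (0 : Fin N) ((3:ℝ)/4) 0
      rw [EuclideanSpace.norm_single]
      simp [EuclideanSpace.single_apply]
  set V₀ := volume (A 0) with hV0def
  have hV0pos : 0 < V₀ := (hAopen 0).measure_pos volume hA0ne
  have hmulr : ∀ k, r 1 * r k = r (k+1) := by
    intro k; simp [hrdef, pow_succ, pow_one, mul_comm]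
  -- scaling: A k = r k • A 0
  have hAsmul : ∀ k, A k = r k • A 0 := by
    intro k
    have hk := hrpos k
    ext x
    rw [Set.mem_smul_set_iff_inv_smul_mem₀ hk.ne']
    have nsm : ‖(r k)⁻¹ • x‖ = ‖x‖ / r k := by
      rw [norm_smul, norm_inv, Real.norm_of_nonneg hk.le, inv_mul_eq_div]
    have csm : ((r k)⁻¹ • x) 0 = x 0 / r k := by
      show (r k)⁻¹ * x 0 = _; rw [inv_mul_eq_div]
    simp only [hAdef, Set.mem_setOf_eq, nsm, csm]
    have hr0 : r 0 = 1 := by simp [hrdef]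
    constructor
    · rintro ⟨h1, h2, h3⟩
      refine ⟨?_, ?_, ?_⟩
      · rw [lt_div_iff₀ hk, hmulr]; exact h1
      · rw [hr0, div_lt_one hk]; exact h2
      · rw [div_right_comm, div_lt_div_iff_of_pos_right hk]; exact h3
    · rintro ⟨h1, h2, h3⟩
      rw [lt_div_iff₀ hk, hmulr] at h1
      rw [hr0, div_lt_one hk] at h2
      rw [div_right_comm, div_lt_div_iff_of_pos_right hk] at h3
      exact ⟨h1, h2, h3⟩
  have hvolA : ∀ k, volume (A k) = ENNReal.ofReal (r k ^ N) * V₀ := by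
    intro k
    rw [hAsmul k, Measure.addHaar_smul_of_nonneg volume (hrpos k).le,
      finrank_euclideanSpace_fin]
  -- the annuli lie in the domain of integration
  have hAsub : ∀ k, A k ⊆ halfSpace N ∩ Metric.ball 0 1 := by
    rintro k x ⟨h1, h2, h3⟩
    have hnx : 0 < ‖x‖ := lt_trans (hrpos (k+1)) h1
    refine ⟨show 0 < x 0 from lt_of_le_of_lt (by positivity) h3, ?_⟩
    rw [mem_ball_zero_iff]
    exact lt_of_lt_of_le h2 (hrle1 k)
  -- per-annulus lower bound
  have hbound : ∀ k, ENNReal.ofReal (h c) * V₀ ≤ ∫⁻ x in A k, F x := by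
    intro k
    have hk := hrpos k
    have step1 : ∀ x ∈ A k, ENNReal.ofReal ((r k) ^ (-1 - α) * h c) ≤ F x := by
      rintro x ⟨h1, h2, h3⟩
      have hnx : 0 < ‖x‖ := lt_trans (hrpos (k+1)) h1
      have hx0 : 0 < x 0 := lt_of_le_of_lt (by positivity) h3
      have hxlt : x 0 < r k := lt_of_le_of_lt (le_trans (le_abs_self _) (coord_le_norm' x 0)) h2
      apply ENNReal.ofReal_le_ofReal
      have hkey := key x h3 hnx
      have hrp : (r k) ^ (-1 - α) ≤ (x 0) ^ (-1 - α) :=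
        Real.rpow_le_rpow_of_nonpos hx0 hxlt.le (by linarith)
      have hhc : h c ≤ h ((x 0) ^ α * U x) :=
        hmono (mem_Ici.mpr hc.le) (mem_Ici.mpr (le_trans hc.le hkey)) hkey
      exact mul_le_mul hrp hhc (hnn c hc.le) (Real.rpow_nonneg hx0.le _)
    calc ENNReal.ofReal (h c) * V₀
        ≤ ENNReal.ofReal ((r k) ^ (-1 - α) * h c) * volume (A k) := by
          rw [hvolA k, ← mul_assoc, ← ENNReal.ofReal_mul (mul_nonneg (Real.rpow_nonneg hk.le _) (hnn c hc.le))]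
          apply mul_le_mul_left
          apply ENNReal.ofReal_le_ofReal
          have hone : (1:ℝ) ≤ (r k) ^ (-1 - α) * r k ^ N := by
            rw [← Real.rpow_natCast (r k) N, ← Real.rpow_add hk]
            exact Real.one_le_rpow_of_pos_of_le_one_of_nonpos hk (hrle1 k) (by linarith)
          calc h c = 1 * h c := (one_mul _).symm
            _ ≤ ((r k) ^ (-1 - α) * r k ^ N) * h c :=
                mul_le_mul_of_nonneg_right hone (hnn c hc.le)
            _ = (r k) ^ (-1 - α) * h c * r k ^ N := by ring
      _ = ∫⁻ _ in A k, ENNReal.ofReal ((r k) ^ (-1 - α) * h c) ∂volume :=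
          (setLIntegral_const _ _).symm
      _ ≤ ∫⁻ x in A k, F x := setLIntegral_mono' (hAopen k).measurableSet step1
  -- disjointness
  have hkey2 : ∀ i j : ℕ, i < j → Disjoint (A i) (A j) := by
    intro i j hij
    rw [Set.disjoint_left]
    rintro x ⟨h1, h2, -⟩ ⟨h1', h2', -⟩
    have : r j ≤ r (i+1) := pow_le_pow_of_le_one (by norm_num) (by norm_num) hij
    linarith
  have hdisj : Pairwise (Function.onFun Disjoint A) := by
    intro i j hij
    rcases lt_or_gt_of_ne hij with hlt | hlt
    · exact hkey2 _ _ hlt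
    · exact (hkey2 _ _ hlt).symm
  -- conclude
  have hne : ENNReal.ofReal (h c) * V₀ ≠ 0 :=
    mul_ne_zero (by simp [ENNReal.ofReal_eq_zero, not_le, hpos c hc]) hV0pos.ne'
  rw [← top_le_iff]
  calc (⊤ : ℝ≥0∞) = ∑' _ : ℕ, (ENNReal.ofReal (h c) * V₀) :=
        (ENNReal.tsum_const_eq_top_of_ne_zero hne).symm
    _ ≤ ∑' k : ℕ, ∫⁻ x in A k, F x := ENNReal.tsum_le_tsum hbound
    _ = ∫⁻ x in ⋃ k, A k, F x :=
        (lintegral_iUnion (fun k => (hAopen k).measurableSet) hdisj F).symm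
    _ ≤ ∫⁻ x in halfSpace N ∩ Metric.ball 0 1, F x :=
        lintegral_mono_set (Set.iUnion_subset hAsub)
end
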